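/- arXiv:2106.02579 — 5 statements merged into one kernel-verified Lean document; each statement's English description precedes it below -/
import Mathlib

section
/- For every σ ∈ (0,1) there exists a ∈ (0,1) such that I(a) = σ and W(a) < 4π/σ. (This is the analytic content of the bound β₀(σ) < 4π/σ for the minimal Willmore energy of spheres with isoperimetric ratio σ, witnessed by a prolate spheroid with semi-axes (a, a, 1).) -/
open Real

/-- `s a = arcsin (√(1 - a²)) / √(1 - a²)`. -/
noncomputable def sAux (a : ℝ) : ℝ := arcsin (Real.sqrt (1 - a ^ 2)) / Real.sqrt (1 - a ^ 2)

/-- Isoperimetric ratio of the prolate spheroid with semi-axes `(a, a, 1)`. -/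
noncomputable def isoRatio (a : ℝ) : ℝ := 8 * a / (a + sAux a) ^ 3

/-- Willmore energy of the prolate spheroid with semi-axes `(a, a, 1)`. -/
noncomputable def willmoreEnergy (a : ℝ) : ℝ :=
  7 * π / 3 + (2 * π / 3) * a ^ 2 + (π / a) * sAux a

/-!
Clearing denominators, `W(a) < 4π/I(a)` becomes `0 < willmoreGap a (s a)`, and `willmoreGap a` is
increasing in `s` once `a + s ≥ 1`; so it suffices to plug in a lower bound for
`s(a) = arcsin b / b`, `b = √(1 - a²)`. For `a ≤ 1/2` the Shafer–Fink bound
`arcsin x ≥ 3x / (2 + √(1 - x²))` is enough. Near `a = 1` the gap vanishes to third order in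
`1 - a`, and there a rational lower bound for `arcsin` that is exact up to order `x⁵` is used.
Both bounds follow by comparing derivatives with that of `arcsin`.

Every `σ ∈ (0, 1)` is a value of `I` by the intermediate value theorem: `I(a) ≤ 8a`, while
`s(a) ≤ 1/a` (which is `θ ≤ tan θ` for `θ = arcsin b`) gives `I(a) ≥ 8a⁴ / (1 + a²)³ → 1`
as `a → 1`.
-/

open Set Filter Topology

lemma le_arcsin_of_hasDerivAt {g g' : ℝ → ℝ} (hg₀ : g 0 = 0)
    (hg : ∀ x ∈ Ico (0 : ℝ) 1, HasDerivAt g (g' x) x)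
    (hg' : ∀ x ∈ Ioo (0 : ℝ) 1, g' x * √(1 - x ^ 2) ≤ 1) {x : ℝ} (hx : x ∈ Ico (0 : ℝ) 1) :
    g x ≤ arcsin x := by
  have hmono : MonotoneOn (fun y => arcsin y - g y) (Ico 0 1) := by
    refine monotoneOn_of_hasDerivWithinAt_nonneg (convex_Ico 0 1)
      (continuous_arcsin.continuousOn.sub fun y hy => (hg y hy).continuousAt.continuousWithinAt)
      (f' := fun y => 1 / √(1 - y ^ 2) - g' y) (fun y hy => ?_) (fun y hy => ?_)
    all_goals rw [interior_Ico] at hy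
    · exact ((hasDerivAt_arcsin (by linarith [hy.1]) hy.2.ne).sub
        (hg y (Ioo_subset_Ico_self hy))).hasDerivWithinAt
    · have hpos : 0 < √(1 - y ^ 2) := sqrt_pos.2 (by nlinarith [hy.1, hy.2])
      rw [sub_nonneg, le_div_iff₀ hpos]
      exact hg' y hy
  simpa [hg₀] using hmono ⟨le_rfl, zero_lt_one⟩ hx hx.1

lemma hasDerivAt_sqrt_one_sub_sq {y : ℝ} (hy : y ^ 2 < 1) :
    HasDerivAt (fun x => √(1 - x ^ 2)) (-y / √(1 - y ^ 2)) y := by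
  convert ((hasDerivAt_pow 2 y).const_sub 1).sqrt (sub_pos.2 hy).ne' using 1
  field_simp
  ring

lemma shafer_fink_le_arcsin {x : ℝ} (hx : x ∈ Ico (0 : ℝ) 1) :
    3 * x / (2 + √(1 - x ^ 2)) ≤ arcsin x := by
  refine le_arcsin_of_hasDerivAt (g := fun x => 3 * x / (2 + √(1 - x ^ 2))) (by simp)
    (fun y hy => ((hasDerivAt_id' y).const_mul 3).div
      ((hasDerivAt_sqrt_one_sub_sq (by nlinarith [hy.1, hy.2])).const_add 2) (by positivity))
    (fun y hy => ?_) hx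
  have hc2 : √(1 - y ^ 2) ^ 2 = 1 - y ^ 2 := sq_sqrt (by nlinarith [hy.1, hy.2])
  have hc : 0 < √(1 - y ^ 2) := sqrt_pos.2 (by nlinarith [hy.1, hy.2])
  set c := √(1 - y ^ 2)
  rw [div_mul_eq_mul_div, div_le_one (by positivity)]
  field_simp
  nlinarith [sq_nonneg (1 - c)]

lemma padeType_le_arcsin {x : ℝ} (hx : x ∈ Ico (0 : ℝ) 1) :
    (2520 * x - 1080 * x ^ 3 - 61 * x ^ 5) / (2520 - 1500 * x ^ 2) ≤ arcsin x := by
  have hQ : ∀ y ∈ Ico (0 : ℝ) 1, 0 < 2520 - 1500 * y ^ 2 := fun y hy => by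
    nlinarith [hy.1, hy.2]
  refine le_arcsin_of_hasDerivAt
    (g := fun x => (2520 * x - 1080 * x ^ 3 - 61 * x ^ 5) / (2520 - 1500 * x ^ 2))
    (g' := fun y => (6350400 - 4384800 * y ^ 2 + 851400 * y ^ 4 + 274500 * y ^ 6) /
      (2520 - 1500 * y ^ 2) ^ 2) (by simp) (fun y hy => ?_) (fun y hy => ?_) hx
  · refine ((((hasDerivAt_id' y).const_mul 2520).sub ((hasDerivAt_pow 3 y).const_mul 1080)).sub
      ((hasDerivAt_pow 5 y).const_mul 61)).div
      (((hasDerivAt_pow 2 y).const_mul 1500).const_sub 2520) (hQ y hy).ne' |>.congr_deriv ?_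
    simp only [Pi.sub_apply]
    ring
  · have hy2 : y ^ 2 < 1 := by nlinarith [hy.1, hy.2]
    have hc2 : √(1 - y ^ 2) ^ 2 = 1 - y ^ 2 := sq_sqrt (by linarith)
    have hQ' := hQ y (Ioo_subset_Ico_self hy)
    rw [div_mul_eq_mul_div, div_le_one (by positivity)]
    refine le_of_sq_le_sq ?_ (by positivity)
    have hcubic : 0 ≤ 3413340 - 2654064 * y ^ 2 + 484035 * y ^ 4 + 93025 * y ^ 6 := by
      nlinarith [sq_nonneg (y ^ 2), pow_nonneg (sq_nonneg y) 3]
    rw [mul_pow, hc2]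
    nlinarith [mul_nonneg (pow_nonneg (sq_nonneg y) 4) hcubic]

section sAux

variable {a : ℝ}

lemma sqrt_one_sub_sq_mem_Ioo (ha : a ∈ Ioo (0 : ℝ) 1) : √(1 - a ^ 2) ∈ Ioo (0 : ℝ) 1 :=
  ⟨sqrt_pos.2 (by nlinarith [ha.1, ha.2]), (sqrt_lt' one_pos).2 (by nlinarith [ha.1])⟩

lemma sqrt_one_sub_sq_sqrt_one_sub_sq (ha : a ∈ Icc (0 : ℝ) 1) : √(1 - √(1 - a ^ 2) ^ 2) = a := by
  rw [sq_sqrt (by nlinarith [ha.1, ha.2]), sub_sub_cancel, sqrt_sq ha.1]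

lemma le_sAux_of_mul_le_arcsin {r : ℝ} (ha : a ∈ Ioo (0 : ℝ) 1)
    (h : r * √(1 - a ^ 2) ≤ arcsin √(1 - a ^ 2)) : r ≤ sAux a :=
  (le_div_iff₀ (sqrt_one_sub_sq_mem_Ioo ha).1).2 h

lemma three_div_two_add_le_sAux (ha : a ∈ Ioo (0 : ℝ) 1) : 3 / (2 + a) ≤ sAux a := by
  refine le_sAux_of_mul_le_arcsin ha ?_
  have h := shafer_fink_le_arcsin (Ioo_subset_Ico_self (sqrt_one_sub_sq_mem_Ioo ha))
  rw [sqrt_one_sub_sq_sqrt_one_sub_sq (Ioo_subset_Icc_self ha)] at h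
  rwa [div_mul_eq_mul_div]

lemma one_lt_sAux (ha : a ∈ Ioo (0 : ℝ) 1) : 1 < sAux a :=
  calc 1 < 3 / (2 + a) := by rw [lt_div_iff₀ (by linarith [ha.1])]; linarith [ha.2]
    _ ≤ sAux a := three_div_two_add_le_sAux ha

lemma padeType_le_sAux (ha : a ∈ Ioo (0 : ℝ) 1) :
    (1379 + 1202 * a ^ 2 - 61 * a ^ 4) / (1020 + 1500 * a ^ 2) ≤ sAux a := by
  refine le_sAux_of_mul_le_arcsin ha ?_
  have hb := sqrt_one_sub_sq_mem_Ioo ha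
  have hb2 : √(1 - a ^ 2) ^ 2 = 1 - a ^ 2 := sq_sqrt (by nlinarith [ha.1, ha.2])
  refine le_of_eq_of_le ?_ (padeType_le_arcsin (Ioo_subset_Ico_self hb))
  set b := √(1 - a ^ 2)
  have hQ : 2520 - 1500 * b ^ 2 = 1020 + 1500 * a ^ 2 := by rw [hb2]; ring
  rw [hQ]
  field_simp
  linear_combination b * (1080 + 61 * (b ^ 2 + 1 - a ^ 2)) * hb2

lemma sAux_le_inv (ha : a ∈ Ioo (0 : ℝ) 1) : sAux a ≤ a⁻¹ := by
  obtain ⟨hb₀, hb₁⟩ := sqrt_one_sub_sq_mem_Ioo ha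
  have h := le_tan (arcsin_nonneg.2 hb₀.le) (arcsin_lt_pi_div_two.2 hb₁)
  rw [tan_arcsin, sqrt_one_sub_sq_sqrt_one_sub_sq (Ioo_subset_Icc_self ha)] at h
  rw [sAux, div_le_iff₀ hb₀]
  calc arcsin √(1 - a ^ 2) ≤ √(1 - a ^ 2) / a := h
    _ = a⁻¹ * √(1 - a ^ 2) := by ring

lemma continuousOn_sAux : ContinuousOn sAux (Ioo 0 1) :=
  ContinuousOn.div (by fun_prop) (by fun_prop) fun _ ha => (sqrt_one_sub_sq_mem_Ioo ha).1.ne'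

end sAux

section willmoreGap

variable {a : ℝ}

def willmoreGap (a s : ℝ) : ℝ := 3 * (a + s) ^ 3 - (14 * a + 4 * a ^ 3 + 6 * s)

lemma willmoreGap_monotoneOn (a : ℝ) : MonotoneOn (willmoreGap a) (Ici (1 - a)) := by
  intro s hs t ht hst
  simp only [mem_Ici] at hs ht
  have hsq : 0 ≤ (a + t) ^ 2 + (a + t) * (a + s) + (a + s) ^ 2 - 2 := by nlinarith
  unfold willmoreGap
  nlinarith [mul_nonneg (sub_nonneg.2 hst) hsq]

lemma willmoreGap_shafer_pos (ha₀ : 0 < a) (ha : a ≤ 1 / 2) :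
    0 < willmoreGap a (3 / (2 + a)) := by
  have hp : 0 < 9 - 22 * a + 3 * a ^ 2 + 16 * a ^ 3 + a ^ 4 - 6 * a ^ 5 - a ^ 6 := by
    nlinarith [pow_pos ha₀ 3, pow_pos ha₀ 4, pow_pos ha₀ 5, mul_pos ha₀ ha₀]
  have key : willmoreGap a (3 / (2 + a)) =
      (9 - 22 * a + 3 * a ^ 2 + 16 * a ^ 3 + a ^ 4 - 6 * a ^ 5 - a ^ 6) / (2 + a) ^ 3 := by
    unfold willmoreGap
    field_simp
    ring
  rw [key]
  positivity

lemma willmoreGap_padeType_pos (ha₀ : 1 / 2 < a) (ha₁ : a < 1) :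
    0 < willmoreGap a ((1379 + 1202 * a ^ 2 - 61 * a ^ 4) / (1020 + 1500 * a ^ 2)) := by
  have hq : 0 < -741180783 + 376610031 * a + 4015924380 * a ^ 2 - 324727356 * a ^ 3
      + 13170389958 * a ^ 4 - 97581798 * a ^ 5 + 8610932316 * a ^ 6 + 1048381380 * a ^ 7
      - 48190671 * a ^ 8 + 680943 * a ^ 9 := by
    have ha : 0 < a := by linarith
    have h3 : a ^ 3 ≤ a ^ 2 := pow_le_pow_of_le_one ha.le ha₁.le (by norm_num)
    have h5 : a ^ 5 ≤ a ^ 4 := pow_le_pow_of_le_one ha.le ha₁.le (by norm_num)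
    have h8 : a ^ 8 ≤ a ^ 6 := pow_le_pow_of_le_one ha.le ha₁.le (by norm_num)
    nlinarith [pow_pos ha 4, pow_pos ha 6, pow_pos ha 7, pow_pos ha 9]
  have key : willmoreGap a ((1379 + 1202 * a ^ 2 - 61 * a ^ 4) / (1020 + 1500 * a ^ 2)) =
      (1 - a) ^ 3 * (-741180783 + 376610031 * a + 4015924380 * a ^ 2 - 324727356 * a ^ 3
      + 13170389958 * a ^ 4 - 97581798 * a ^ 5 + 8610932316 * a ^ 6 + 1048381380 * a ^ 7
      - 48190671 * a ^ 8 + 680943 * a ^ 9) / (1020 + 1500 * a ^ 2) ^ 3 := by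
    unfold willmoreGap
    field_simp
    ring
  rw [key]
  have : 0 < 1 - a := by linarith
  positivity

end willmoreGap

section spheroid

variable {a : ℝ}

lemma willmoreGap_sAux_pos (ha : a ∈ Ioo (0 : ℝ) 1) : 0 < willmoreGap a (sAux a) := by
  have hs : sAux a ∈ Ici (1 - a) := by simp only [mem_Ici]; linarith [one_lt_sAux ha, ha.1]
  rcases le_or_gt a (1 / 2) with h | h
  · have h₀ : 3 / (2 + a) ∈ Ici (1 - a) := by
      rw [mem_Ici, le_div_iff₀ (by linarith [ha.1])]; nlinarith [ha.1]
    exact (willmoreGap_shafer_pos ha.1 h).trans_le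
      (willmoreGap_monotoneOn a h₀ hs (three_div_two_add_le_sAux ha))
  · have h₀ : (1379 + 1202 * a ^ 2 - 61 * a ^ 4) / (1020 + 1500 * a ^ 2) ∈ Ici (1 - a) := by
      have ha2 : a ^ 2 < 1 := pow_lt_one₀ ha.1.le ha.2 two_ne_zero
      rw [mem_Ici, le_div_iff₀ (by positivity)]
      nlinarith [ha.1, pow_pos ha.1 3, mul_lt_mul'' ha2 ha2 (sq_nonneg a) (sq_nonneg a)]
    exact (willmoreGap_padeType_pos h ha.2).trans_le
      (willmoreGap_monotoneOn a h₀ hs (padeType_le_sAux ha))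

lemma willmoreEnergy_lt_four_pi_div_isoRatio (ha : a ∈ Ioo (0 : ℝ) 1) :
    willmoreEnergy a < 4 * π / isoRatio a := by
  have hs := one_lt_sAux ha
  have ha₀ := ha.1
  have key : 4 * π / isoRatio a - willmoreEnergy a = π * willmoreGap a (sAux a) / (6 * a) := by
    rw [willmoreEnergy, isoRatio, willmoreGap]
    field_simp
    ring
  have hgap := willmoreGap_sAux_pos ha
  rw [← sub_pos, key]
  positivity

lemma continuousOn_isoRatio : ContinuousOn isoRatio (Ioo 0 1) :=
  ContinuousOn.div (by fun_prop) ((continuousOn_id.add continuousOn_sAux).pow 3)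
    fun a ha => (pow_pos (by linarith [ha.1, one_lt_sAux ha]) 3).ne'

lemma isoRatio_le (ha : a ∈ Ioo (0 : ℝ) 1) : isoRatio a ≤ 8 * a :=
  div_le_self (by linarith [ha.1]) (one_le_pow₀ (by linarith [ha.1, one_lt_sAux ha]))

lemma le_isoRatio (ha : a ∈ Ioo (0 : ℝ) 1) : 8 * a ^ 4 / (1 + a ^ 2) ^ 3 ≤ isoRatio a := by
  have ha₀ := ha.1
  have e : 8 * a ^ 4 / (1 + a ^ 2) ^ 3 = 8 * a / (a + a⁻¹) ^ 3 := by
    field_simp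
    ring
  rw [e, isoRatio]
  have hs := one_lt_sAux ha
  gcongr
  exact sAux_le_inv ha

lemma exists_isoRatio_eq {σ : ℝ} (hσ : σ ∈ Ioo (0 : ℝ) 1) :
    ∃ a ∈ Ioo (0 : ℝ) 1, isoRatio a = σ := by
  have hlim : Tendsto (fun a : ℝ => 8 * a ^ 4 / (1 + a ^ 2) ^ 3) (𝓝[<] 1) (𝓝 1) := by
    have hc : Continuous (fun a : ℝ => 8 * a ^ 4 / (1 + a ^ 2) ^ 3) :=
      Continuous.div (by fun_prop) (by fun_prop) fun a => by positivity
    exact (hc.tendsto' 1 1 (by norm_num)).mono_left nhdsWithin_le_nhds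
  obtain ⟨a₁, ha₁σ, ha₁⟩ :=
    ((hlim.eventually (lt_mem_nhds hσ.2)).and (Ioo_mem_nhdsLT zero_lt_one)).exists
  have ha₀ : σ / 9 ∈ Ioo (0 : ℝ) 1 := ⟨by linarith [hσ.1], by linarith [hσ.2]⟩
  exact isPreconnected_Ioo.intermediate_value ha₀ ha₁ continuousOn_isoRatio
    ⟨(isoRatio_le ha₀).trans (by linarith [hσ.1]), ha₁σ.le.trans (le_isoRatio ha₁)⟩

end spheroid

theorem exists_spheroid_below_threshold :
    ∀ σ ∈ Set.Ioo (0 : ℝ) 1, ∃ a ∈ Set.Ioo (0 : ℝ) 1,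
      isoRatio a = σ ∧ willmoreEnergy a < 4 * π / σ := by
  intro σ hσ
  obtain ⟨a, ha, rfl⟩ := exists_isoRatio_eq hσ
  exact ⟨a, ha, rfl, willmoreEnergy_lt_four_pi_div_isoRatio ha⟩
end

section
/- The function F : (0,1) → ℝ defined by F(a) := 14 + 4a² + 6·arcsin(√(1−a²))/(a·√(1−a²)) − 3·(a + arcsin(√(1−a²))/√(1−a²))³/a satisfies F(a) < 0 for all a ∈ (0,1). -/
open Real Set

/-!
Put `a = cos θ` with `0 < θ ≤ π / 2`, so that `√(1 - a²) = sin θ` and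
`F a = Φ(cos θ, θ / sin θ) / a` with `Φ a t = 14 a + 4 a³ + 6 t - 3 (a + t)³`. Along this curve
`Φ` vanishes to order six at `θ = 0` (its expansion starts with `-71 θ⁶ / 360`), so Taylor bounds
of that accuracy are needed. Since `Φ a` is decreasing on `t ≥ 1`, the bound `sin θ ≤ T₅ θ` lets
us replace `t` by `θ / T₅ θ`; clearing the denominator gives a polynomial `Ψ`, in which `cos θ` is
replaced by its lower bound `T₆ θ` at a cost of at most `17 θ⁹ / 720`, because
`cos θ - T₆ θ ≤ θ⁶ / 720`. What remains is `θ⁹` times a polynomial in `θ²` that stays below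
`-1/40` on `[0, (π / 2)²]`.
-/

theorem le_of_deriv_le_of_nonneg {f g : ℝ → ℝ} (hf : Differentiable ℝ f)
    (hg : Differentiable ℝ g) (h₀ : f 0 ≤ g 0) (hderiv : ∀ t, 0 < t → deriv f t ≤ deriv g t)
    {x : ℝ} (hx : 0 ≤ x) : f x ≤ g x := by
  have hmono : MonotoneOn (g - f) (Ici 0) := by
    refine monotoneOn_of_deriv_nonneg (convex_Ici 0) (hg.sub hf).continuous.continuousOn
      (hg.sub hf).differentiableOn fun t ht => ?_
    rw [interior_Ici] at ht
    rw [deriv_sub (hg t) (hf t), sub_nonneg]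
    exact hderiv t ht
  have := hmono self_mem_Ici hx hx
  simp only [Pi.sub_apply] at this
  linarith

theorem cos_le_taylor4 {x : ℝ} (hx : 0 ≤ x) : cos x ≤ 1 - x ^ 2 / 2 + x ^ 4 / 24 := by
  refine le_of_deriv_le_of_nonneg (f := cos) (g := fun x => 1 - x ^ 2 / 2 + x ^ 4 / 24)
    differentiable_cos (by fun_prop) (by norm_num) (fun t ht => ?_) hx
  simp (disch := fun_prop) only [deriv_fun_add, deriv_fun_sub, deriv_const', deriv_id'',
    deriv_div_const, deriv_fun_pow, deriv_cos']
  norm_num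
  nlinarith [sin_ge_sub_cube ht.le]

theorem sin_le_taylor5 {x : ℝ} (hx : 0 ≤ x) : sin x ≤ x - x ^ 3 / 6 + x ^ 5 / 120 := by
  refine le_of_deriv_le_of_nonneg (f := sin) (g := fun x => x - x ^ 3 / 6 + x ^ 5 / 120)
    differentiable_sin (by fun_prop) (by norm_num) (fun t ht => ?_) hx
  simp (disch := fun_prop) only [deriv_fun_add, deriv_fun_sub, deriv_id'', deriv_div_const,
    deriv_fun_pow, Real.deriv_sin]
  norm_num
  nlinarith [cos_le_taylor4 ht.le]

theorem taylor6_le_cos {x : ℝ} (hx : 0 ≤ x) :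
    1 - x ^ 2 / 2 + x ^ 4 / 24 - x ^ 6 / 720 ≤ cos x := by
  refine le_of_deriv_le_of_nonneg (f := fun x => 1 - x ^ 2 / 2 + x ^ 4 / 24 - x ^ 6 / 720)
    (g := cos) (by fun_prop) differentiable_cos (by norm_num) (fun t ht => ?_) hx
  simp (disch := fun_prop) only [deriv_fun_add, deriv_fun_sub, deriv_const', deriv_id'',
    deriv_div_const, deriv_fun_pow, deriv_cos']
  norm_num
  nlinarith [sin_le_taylor5 ht.le]

/-- With `a = cos θ` one has `F a = Φ a (θ / sin θ) / a`. -/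
def Φ (a t : ℝ) : ℝ := 14 * a + 4 * a ^ 3 + 6 * t - 3 * (a + t) ^ 3

theorem Φ_antitoneOn {a : ℝ} (ha : 0 ≤ a) : AntitoneOn (Φ a) (Ici 1) := by
  intro t₀ ht₀ t ht hle
  rw [mem_Ici] at ht₀ ht
  have hsq : 2 ≤ (a + t) ^ 2 + (a + t) * (a + t₀) + (a + t₀) ^ 2 := by nlinarith
  have hfac : Φ a t₀ - Φ a t =
      (t - t₀) * (3 * ((a + t) ^ 2 + (a + t) * (a + t₀) + (a + t₀) ^ 2) - 6) := by
    unfold Φ; ring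
  rw [← sub_nonneg, hfac]
  exact mul_nonneg (sub_nonneg.2 hle) (by linarith)

def Ψ (a θ u : ℝ) : ℝ := (14 * a + 4 * a ^ 3) * u ^ 3 + 6 * θ * u ^ 2 - 3 * (a * u + θ) ^ 3

theorem Φ_div_mul_pow_three (a θ : ℝ) {u : ℝ} (hu : u ≠ 0) :
    Φ a (θ / u) * u ^ 3 = Ψ a θ u := by
  unfold Φ Ψ; field_simp

theorem Ψ_sub_Ψ_le {a c θ u : ℝ} (ha₀ : 0 ≤ a) (ha : a ≤ 1) (hc : -1 ≤ c) (hca : c ≤ a)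
    (hu : 0 < u) (huθ : u ≤ θ) : Ψ a θ u - Ψ c θ u ≤ 17 * θ ^ 3 * (a - c) := by
  have hfac : Ψ a θ u - Ψ c θ u = (a - c) * (14 * u ^ 3 + (a ^ 2 + a * c + c ^ 2) * u ^ 3
      - 9 * (a + c) * θ * u ^ 2 - 9 * θ ^ 2 * u) := by
    unfold Ψ; ring
  have hM : 14 * u ^ 3 + (a ^ 2 + a * c + c ^ 2) * u ^ 3 - 9 * (a + c) * θ * u ^ 2
      - 9 * θ ^ 2 * u ≤ 17 * θ ^ 3 := by
    have hθ : 0 < θ := hu.trans_le huθ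
    have h₁ : 14 * u ^ 3 - 9 * θ ^ 2 * u ≤ 5 * θ ^ 3 := by
      nlinarith [mul_le_mul_of_nonneg_left (pow_le_pow_left₀ hu.le huθ 2) hu.le,
        pow_le_pow_left₀ hu.le huθ 3]
    have h₂ : (a ^ 2 + a * c + c ^ 2) * u ^ 3 ≤ 3 * θ ^ 3 := by
      have : a ^ 2 + a * c + c ^ 2 ≤ 3 := by nlinarith
      nlinarith [pow_le_pow_left₀ hu.le huθ 3, pow_pos hu 3]
    have h₃ : -9 * (a + c) * θ * u ^ 2 ≤ 9 * θ ^ 3 := by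
      nlinarith [mul_le_mul_of_nonneg_left (pow_le_pow_left₀ hu.le huθ 2) hθ.le,
        mul_nonneg hθ.le (sq_nonneg u)]
    linarith
  rw [hfac, mul_comm]
  exact mul_le_mul_of_nonneg_right hM (sub_nonneg.2 hca)

/-- This is `p` in `Ψ (T₆ θ) θ (T₅ θ) = θ⁹ p(θ²)`, where `T₆` and `T₅` are the Taylor polynomials
of `cos` and `sin`. -/
theorem Ψ_taylor_quotient_lt {x : ℝ} (hx₀ : 0 ≤ x) (hx : x ≤ 2.4675) :
    -71 / 360 + 2893 / 21600 * x - 227 / 5184 * x ^ 2 + 6907 / 777600 * x ^ 3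
      - 6427 / 5184000 * x ^ 4 + 3911 / 31104000 * x ^ 5 - 8899 / 933120000 * x ^ 6
      + 1361 / 2488320000 * x ^ 7 - 47 / 1990656000 * x ^ 8 + 12089 / 16124313600000 * x ^ 9
      - 179 / 10749542400000 * x ^ 10 + 1 / 4299816960000 * x ^ 11
      - 1 / 644972544000000 * x ^ 12 < -1 / 40 := by
  nlinarith [mul_nonneg hx₀ (sub_nonneg.2 hx), pow_nonneg hx₀ 2, pow_nonneg hx₀ 4,
    pow_nonneg hx₀ 6, pow_nonneg hx₀ 8, pow_nonneg hx₀ 10]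

theorem Ψ_taylor_lt {θ : ℝ} (hθ : 0 < θ) (hθ₂ : θ ^ 2 ≤ 2.4675) :
    Ψ (1 - θ ^ 2 / 2 + θ ^ 4 / 24 - θ ^ 6 / 720) θ (θ - θ ^ 3 / 6 + θ ^ 5 / 120)
      < -θ ^ 9 / 40 := by
  unfold Ψ
  linear_combination
    mul_lt_mul_of_pos_left (Ψ_taylor_quotient_lt (sq_nonneg θ) hθ₂) (pow_pos hθ 9)

theorem Φ_cos_div_sin_neg {θ : ℝ} (hθ : 0 < θ) (hθπ : θ ≤ π / 2) :
    Φ (cos θ) (θ / sin θ) < 0 := by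
  set u := θ - θ ^ 3 / 6 + θ ^ 5 / 120 with hu_def
  set c := 1 - θ ^ 2 / 2 + θ ^ 4 / 24 - θ ^ 6 / 720 with hc_def
  have hθ₂ : θ ^ 2 ≤ 2.4675 := by nlinarith [pi_lt_d6]
  have hsin : 0 < sin θ := sin_pos_of_pos_of_lt_pi hθ (by linarith [pi_pos])
  have hcos : 0 ≤ cos θ := cos_nonneg_of_neg_pi_div_two_le_of_le (by linarith) hθπ
  have hsu : sin θ ≤ u := sin_le_taylor5 hθ.le
  have huθ : u ≤ θ := by nlinarith [pow_pos hθ 3]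
  have hu : 0 < u := hsin.trans_le hsu
  have hc : c ≤ cos θ := taylor6_le_cos hθ.le
  have hc₁ : -1 ≤ c := by nlinarith [pow_nonneg (sq_nonneg θ) 3]
  have hcos_sub : cos θ - c ≤ θ ^ 6 / 720 := by linarith [cos_le_taylor4 hθ.le]
  have hΨ : Ψ (cos θ) θ u < 0 :=
    calc Ψ (cos θ) θ u ≤ Ψ c θ u + 17 * θ ^ 3 * (cos θ - c) := by
          linarith [Ψ_sub_Ψ_le hcos (cos_le_one θ) hc₁ hc hu huθ]
      _ ≤ Ψ c θ u + 17 * θ ^ 3 * (θ ^ 6 / 720) := by gcongr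
      _ < 0 := by linarith [Ψ_taylor_lt hθ hθ₂, pow_pos hθ 9]
  have hΦu : Φ (cos θ) (θ / u) < 0 := by
    rw [← Φ_div_mul_pow_three _ _ hu.ne'] at hΨ
    exact neg_of_mul_neg_left hΨ (pow_pos hu 3).le
  calc Φ (cos θ) (θ / sin θ) ≤ Φ (cos θ) (θ / u) :=
        Φ_antitoneOn hcos ((one_le_div hu).2 huθ) ((one_le_div hsin).2 (sin_le hθ.le))
          (div_le_div_of_nonneg_left hθ.le hsin hsu)
    _ < 0 := hΦu

theorem F_neg :
    ∀ a ∈ Set.Ioo (0 : ℝ) 1,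
      14 + 4 * a ^ 2 + 6 * arcsin (Real.sqrt (1 - a ^ 2)) / (a * Real.sqrt (1 - a ^ 2))
        - 3 * (a + arcsin (Real.sqrt (1 - a ^ 2)) / Real.sqrt (1 - a ^ 2)) ^ 3 / a < 0 := by
  rintro a ⟨ha₀, ha₁⟩
  have hs : 0 < √(1 - a ^ 2) := Real.sqrt_pos.2 (by nlinarith)
  have hs₁ : √(1 - a ^ 2) ≤ 1 := Real.sqrt_le_one.2 (by nlinarith)
  have hsin : sin (arcsin √(1 - a ^ 2)) = √(1 - a ^ 2) := sin_arcsin (by linarith) hs₁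
  have hcos : cos (arcsin √(1 - a ^ 2)) = a := by
    rw [cos_arcsin, Real.sq_sqrt (by nlinarith), sub_sub_cancel, Real.sqrt_sq ha₀.le]
  have key := Φ_cos_div_sin_neg (arcsin_pos.2 hs) (arcsin_le_pi_div_two _)
  rw [hsin, hcos] at key
  calc _ = Φ a (arcsin √(1 - a ^ 2) / √(1 - a ^ 2)) / a := by unfold Φ; field_simp
    _ < 0 := div_neg_of_neg_of_pos key ha₀
end

section
/- For every a ∈ (0,1) one has the integral identity (π/2)·∫_{−π/2}^{π/2} ((1+a²)·cos²t + 2a²·sin²t)²·cos t / (a·(cos²t + a²·sin²t)^{5/2}) dt = 7π/3 + (2π/3)a² + (π/a)·arcsin(√(1−a²))/√(1−a²). (This computes the Willmore energy of the prolate spheroid (a cos t cos θ, a cos t sin θ, sin t).) -/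
/-!
With `k = √(1 - a²)` and `s = sin t`, the denominator `cos²t + a² sin²t` becomes `1 - k²s²` and the
numerator `(1 + a²) cos²t + 2a² sin²t` becomes `1 - k²s² + a²`. Expanding the square, the integrand
is a combination of `(1 - k²s²)^(-1/2)`, `(1 - k²s²)^(-3/2)` and `(1 - k²s²)^(-5/2)` times `ds`,
whose primitives are `arcsin (k s) / k`, `s / √(1 - k²s²)` and a combination of `s / √(1 - k²s²)`
and `s / √(1 - k²s²)³`. The primitive is odd, and at `s = 1` we have `√(1 - k²) = a`.
-/

open Real

theorem rpow_five_halves_eq_sqrt_pow {x : ℝ} (hx : 0 ≤ x) : x ^ ((5 : ℝ) / 2) = √x ^ 5 := by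
  rw [sqrt_eq_rpow, ← rpow_mul_natCast hx]
  norm_num

section Primitive

variable {k s : ℝ}

theorem hasDerivAt_arcsin_mul_div (hk : k ≠ 0) (hks : (k * s) ^ 2 < 1) :
    HasDerivAt (fun s => arcsin (k * s) / k) (1 / √(1 - (k * s) ^ 2)) s := by
  have hlt : |k * s| < 1 := by rwa [← sq_lt_one_iff_abs_lt_one]
  have hmul : HasDerivAt (fun s => k * s) k s := by simpa using (hasDerivAt_id s).const_mul k
  have h := (hasDerivAt_arcsin (by linarith [neg_abs_le (k * s)])
    (by linarith [le_abs_self (k * s)])).comp s hmul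
  refine (h.div_const k).congr_deriv ?_
  field_simp

theorem hasDerivAt_sqrt_one_sub_sq_s2 (hks : (k * s) ^ 2 < 1) :
    HasDerivAt (fun s => √(1 - (k * s) ^ 2)) (-(k ^ 2 * s) / √(1 - (k * s) ^ 2)) s := by
  have hw : HasDerivAt (fun s => 1 - (k * s) ^ 2) (-(2 * k ^ 2 * s)) s := by
    refine ((((hasDerivAt_id' s).const_mul k).fun_pow 2).const_sub 1).congr_deriv ?_
    norm_num
    ring
  refine (hw.sqrt (by linarith)).congr_deriv ?_
  field_simp

theorem hasDerivAt_div_sqrt_one_sub_sq (hks : (k * s) ^ 2 < 1) :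
    HasDerivAt (fun s => s / √(1 - (k * s) ^ 2)) (1 / √(1 - (k * s) ^ 2) ^ 3) s := by
  have hr2 : √(1 - (k * s) ^ 2) ^ 2 = 1 - (k * s) ^ 2 := sq_sqrt (by linarith)
  have hr : 0 < √(1 - (k * s) ^ 2) := sqrt_pos.2 (by linarith)
  refine ((hasDerivAt_id' s).div (hasDerivAt_sqrt_one_sub_sq_s2 hks) hr.ne').congr_deriv ?_
  generalize √(1 - (k * s) ^ 2) = r at hr hr2 ⊢
  field_simp
  linear_combination hr2

theorem hasDerivAt_div_sqrt_one_sub_sq_pow_three (hks : (k * s) ^ 2 < 1) :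
    HasDerivAt (fun s => s / √(1 - (k * s) ^ 2) ^ 3)
      (3 / √(1 - (k * s) ^ 2) ^ 5 - 2 / √(1 - (k * s) ^ 2) ^ 3) s := by
  have hr2 : √(1 - (k * s) ^ 2) ^ 2 = 1 - (k * s) ^ 2 := sq_sqrt (by linarith)
  have hr : 0 < √(1 - (k * s) ^ 2) := sqrt_pos.2 (by linarith)
  refine ((hasDerivAt_id' s).div ((hasDerivAt_sqrt_one_sub_sq_s2 hks).fun_pow 3)
    (by positivity)).congr_deriv ?_
  generalize √(1 - (k * s) ^ 2) = r at hr hr2 ⊢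
  field_simp
  linear_combination 3 * r ^ 2 * hr2

end Primitive

noncomputable def spheroidPrimitive (k b s : ℝ) : ℝ :=
  arcsin (k * s) / k + (2 * b + 2 * b ^ 2 / 3) * (s / √(1 - (k * s) ^ 2))
    + b ^ 2 / 3 * (s / √(1 - (k * s) ^ 2) ^ 3)

theorem hasDerivAt_spheroidPrimitive {k s : ℝ} (hk : k ≠ 0) (hks : (k * s) ^ 2 < 1) (b : ℝ) :
    HasDerivAt (spheroidPrimitive k b) ((1 - (k * s) ^ 2 + b) ^ 2 / √(1 - (k * s) ^ 2) ^ 5) s := by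
  have hr2 : √(1 - (k * s) ^ 2) ^ 2 = 1 - (k * s) ^ 2 := sq_sqrt (by linarith)
  have hr : 0 < √(1 - (k * s) ^ 2) := sqrt_pos.2 (by linarith)
  refine (((hasDerivAt_arcsin_mul_div hk hks).add
    ((hasDerivAt_div_sqrt_one_sub_sq hks).const_mul (2 * b + 2 * b ^ 2 / 3))).add
    ((hasDerivAt_div_sqrt_one_sub_sq_pow_three hks).const_mul (b ^ 2 / 3))).congr_deriv ?_
  rw [show 1 - (k * s) ^ 2 + b = √(1 - (k * s) ^ 2) ^ 2 + b by rw [hr2]]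
  generalize √(1 - (k * s) ^ 2) = r at hr ⊢
  field_simp
  ring

theorem spheroidPrimitive_neg (k b s : ℝ) :
    spheroidPrimitive k b (-s) = -spheroidPrimitive k b s := by
  simp only [spheroidPrimitive, mul_neg, neg_sq, arcsin_neg]
  ring

theorem sq_mul_sin_lt_one {k : ℝ} (hk : k ^ 2 < 1) (t : ℝ) : (k * sin t) ^ 2 < 1 := by
  rw [mul_pow]
  nlinarith [sin_sq_le_one t, sq_nonneg k]

theorem integral_spheroidPrimitive_deriv_sin {k : ℝ} (hk0 : k ≠ 0) (hk1 : k ^ 2 < 1) (b : ℝ) :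
    ∫ t in -(π / 2)..π / 2, (1 - (k * sin t) ^ 2 + b) ^ 2 / √(1 - (k * sin t) ^ 2) ^ 5 * cos t
      = 2 * spheroidPrimitive k b 1 := by
  have hderiv (t : ℝ) : HasDerivAt (fun t => spheroidPrimitive k b (sin t))
      ((1 - (k * sin t) ^ 2 + b) ^ 2 / √(1 - (k * sin t) ^ 2) ^ 5 * cos t) t :=
    (hasDerivAt_spheroidPrimitive hk0 (sq_mul_sin_lt_one hk1 t) b).comp t (hasDerivAt_sin t)
  have hcont : Continuous fun t =>
      (1 - (k * sin t) ^ 2 + b) ^ 2 / √(1 - (k * sin t) ^ 2) ^ 5 * cos t := by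
    refine .mul (.div (by fun_prop) (by fun_prop) fun t => ?_) (by fun_prop)
    have := sqrt_pos.2 (sub_pos.2 (sq_mul_sin_lt_one hk1 t))
    positivity
  rw [intervalIntegral.integral_eq_sub_of_hasDerivAt (fun t _ => hderiv t)
    (hcont.intervalIntegrable _ _)]
  simp only [sin_neg, sin_pi_div_two, spheroidPrimitive_neg]
  ring

theorem willmore_energy_of_spheroid (a : ℝ) (ha : a ∈ Set.Ioo (0 : ℝ) 1) :
    (π / 2) * ∫ t in (-(π / 2))..(π / 2),
        ((1 + a ^ 2) * cos t ^ 2 + 2 * a ^ 2 * sin t ^ 2) ^ 2 * cos t /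
          (a * (cos t ^ 2 + a ^ 2 * sin t ^ 2) ^ ((5 : ℝ) / 2))
      = 7 * π / 3 + (2 * π / 3) * a ^ 2
        + (π / a) * (arcsin (Real.sqrt (1 - a ^ 2)) / Real.sqrt (1 - a ^ 2)) := by
  obtain ⟨ha0, ha1⟩ := ha
  set k := √(1 - a ^ 2)
  have hk2 : k ^ 2 = 1 - a ^ 2 := sq_sqrt (by nlinarith)
  have hk0 : 0 < k := sqrt_pos.2 (by nlinarith)
  have hk1 : k ^ 2 < 1 := by rw [hk2]; linarith [pow_pos ha0 2]
  have hdenom (t : ℝ) : cos t ^ 2 + a ^ 2 * sin t ^ 2 = 1 - (k * sin t) ^ 2 := by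
    linear_combination sin t ^ 2 * hk2 + sin_sq_add_cos_sq t
  have hnum (t : ℝ) :
      (1 + a ^ 2) * cos t ^ 2 + 2 * a ^ 2 * sin t ^ 2 = 1 - (k * sin t) ^ 2 + a ^ 2 := by
    linear_combination sin t ^ 2 * hk2 + (1 + a ^ 2) * sin_sq_add_cos_sq t
  have hintegrand (t : ℝ) :
      ((1 + a ^ 2) * cos t ^ 2 + 2 * a ^ 2 * sin t ^ 2) ^ 2 * cos t /
          (a * (cos t ^ 2 + a ^ 2 * sin t ^ 2) ^ ((5 : ℝ) / 2))
        = a⁻¹ * ((1 - (k * sin t) ^ 2 + a ^ 2) ^ 2 / √(1 - (k * sin t) ^ 2) ^ 5 * cos t) := by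
    have hw : 0 ≤ 1 - (k * sin t) ^ 2 := sub_nonneg.2 (sq_mul_sin_lt_one hk1 t).le
    rw [hnum, hdenom, rpow_five_halves_eq_sqrt_pow hw]
    field_simp
  have hsqrt : √(1 - k ^ 2) = a := by rw [hk2, sub_sub_cancel, sqrt_sq ha0.le]
  simp only [hintegrand, intervalIntegral.integral_const_mul,
    integral_spheroidPrimitive_deriv_sin hk0.ne' hk1 (a ^ 2), spheroidPrimitive,
    mul_one, hsqrt]
  field_simp
  ring
end

section
/- For every a ∈ (0,1) one has 0 < 8a/(a + s(a))³ < 1; in particular the isoperimetric ratio I(a) of the prolate spheroid lies strictly between 0 and 1. -/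
open Real

lemma my_sin_ge {x : ℝ} (hx : 0 ≤ x) : x - x ^ 3 / 6 ≤ Real.sin x := by
  have hmono : MonotoneOn (fun y : ℝ => Real.sin y - y + y ^ 3 / 6) (Set.Ici 0) := by
    apply monotoneOn_of_deriv_nonneg (convex_Ici 0)
    · fun_prop
    · apply Differentiable.differentiableOn; fun_prop
    · intro y _
      have hd : HasDerivAt (fun y : ℝ => Real.sin y - y + y ^ 3 / 6)
          (Real.cos y - 1 + 3 * y ^ (3 - 1) / 6) y :=
        ((Real.hasDerivAt_sin y).sub (hasDerivAt_id y)).add ((hasDerivAt_pow 3 y).div_const 6)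
      rw [hd.deriv]
      have := Real.one_sub_sq_div_two_le_cos (x := y)
      norm_num at this ⊢
      linarith
  have := hmono (Set.self_mem_Ici) (Set.mem_Ici.2 hx) hx
  simp at this
  linarith

lemma my_cos_le {x : ℝ} (hx : 0 ≤ x) : Real.cos x ≤ 1 - x ^ 2 / 2 + x ^ 4 / 24 := by
  have hmono : MonotoneOn (fun y : ℝ => 1 - y ^ 2 / 2 + y ^ 4 / 24 - Real.cos y)
      (Set.Ici 0) := by
    apply monotoneOn_of_deriv_nonneg (convex_Ici 0)
    · fun_prop
    · apply Differentiable.differentiableOn; fun_prop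
    · intro y hy
      rw [interior_Ici] at hy
      have hd : HasDerivAt (fun y : ℝ => 1 - y ^ 2 / 2 + y ^ 4 / 24 - Real.cos y)
          ((0 - 2 * y ^ (2 - 1) / 2 + 4 * y ^ (4 - 1) / 24) - (-Real.sin y)) y := by
        exact (((hasDerivAt_const y (1 : ℝ)).sub ((hasDerivAt_pow 2 y).div_const 2)).add
          ((hasDerivAt_pow 4 y).div_const 24)).sub (Real.hasDerivAt_cos y)
      rw [hd.deriv]
      have := my_sin_ge (le_of_lt hy)
      norm_num at this ⊢
      linarith
  have := hmono (Set.self_mem_Ici) (Set.mem_Ici.2 hx) hx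
  simp at this
  linarith

lemma my_sin_le {x : ℝ} (hx : 0 ≤ x) : Real.sin x ≤ x - x ^ 3 / 6 + x ^ 5 / 120 := by
  have hmono : MonotoneOn (fun y : ℝ => y - y ^ 3 / 6 + y ^ 5 / 120 - Real.sin y)
      (Set.Ici 0) := by
    apply monotoneOn_of_deriv_nonneg (convex_Ici 0)
    · fun_prop
    · apply Differentiable.differentiableOn; fun_prop
    · intro y hy
      rw [interior_Ici] at hy
      have hd : HasDerivAt (fun y : ℝ => y - y ^ 3 / 6 + y ^ 5 / 120 - Real.sin y)
          ((1 - 3 * y ^ (3 - 1) / 6 + 5 * y ^ (5 - 1) / 120) - Real.cos y) y := by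
        exact (((hasDerivAt_id y).sub ((hasDerivAt_pow 3 y).div_const 6)).add
          ((hasDerivAt_pow 5 y).div_const 120)).sub (Real.hasDerivAt_sin y)
      rw [hd.deriv]
      have := my_cos_le (le_of_lt hy)
      norm_num at this ⊢
      linarith
  have := hmono (Set.self_mem_Ici) (Set.mem_Ici.2 hx) hx
  simp at this
  linarith

theorem isoRatio_mem_Ioo :
    ∀ a ∈ Set.Ioo (0 : ℝ) 1,
      0 < 8 * a / (a + sAux a) ^ 3 ∧ 8 * a / (a + sAux a) ^ 3 < 1 := by
  rintro a ⟨ha0, ha1⟩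
  set u : ℝ := Real.sqrt (1 - a ^ 2) with hu_def
  have h1a : 0 < 1 - a ^ 2 := by nlinarith
  have hu0 : 0 < u := Real.sqrt_pos.2 h1a
  have hu2 : u ^ 2 = 1 - a ^ 2 := Real.sq_sqrt h1a.le
  have hu1 : u ≤ 1 := by nlinarith [hu2, hu0]
  -- arcsin u ≥ u + u^3/6
  have hpi : (7 : ℝ) / 6 ≤ π / 2 := by nlinarith [Real.pi_gt_three]
  have ht2 : u + u ^ 3 / 6 ≤ π / 2 := by nlinarith
  have ht1 : (0 : ℝ) ≤ u + u ^ 3 / 6 := by positivity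
  have hsin : Real.sin (u + u ^ 3 / 6) ≤ u := by
    have h := my_sin_le ht1
    have hpoly : (u + u ^ 3 / 6) - (u + u ^ 3 / 6) ^ 3 / 6 + (u + u ^ 3 / 6) ^ 5 / 120 ≤ u := by
      have h9 : u ^ 9 ≤ u ^ 5 := pow_le_pow_of_le_one hu0.le hu1 (by norm_num)
      have h11 : u ^ 11 ≤ u ^ 5 := pow_le_pow_of_le_one hu0.le hu1 (by norm_num)
      have h13 : u ^ 13 ≤ u ^ 5 := pow_le_pow_of_le_one hu0.le hu1 (by norm_num)
      have h15 : u ^ 15 ≤ u ^ 5 := pow_le_pow_of_le_one hu0.le hu1 (by norm_num)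
      have h7 : (0 : ℝ) ≤ u ^ 7 := by positivity
      have h5 : (0 : ℝ) ≤ u ^ 5 := by positivity
      nlinarith [h9, h11, h13, h15, h7, h5]
    linarith
  have harc : u + u ^ 3 / 6 ≤ arcsin u := by
    have := Real.arcsin_sin (by linarith [ht1] : -(π / 2) ≤ u + u ^ 3 / 6) ht2
    calc u + u ^ 3 / 6 = arcsin (Real.sin (u + u ^ 3 / 6)) := this.symm
      _ ≤ arcsin u := Real.monotone_arcsin hsin
  -- sAux a ≥ 1 + u^2/6
  have hs : 1 + u ^ 2 / 6 ≤ sAux a := by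
    rw [sAux, ← hu_def]
    rw [le_div_iff₀ hu0]
    nlinarith [harc, hu0]
  have hkey : (7 + 6 * a - a ^ 2) / 6 ≤ a + sAux a := by
    have : 1 + (1 - a ^ 2) / 6 ≤ sAux a := by rw [← hu2]; linarith
    linarith
  have hpos : 0 < a + sAux a := by nlinarith
  have hcube : ((7 + 6 * a - a ^ 2) / 6) ^ 3 ≤ (a + sAux a) ^ 3 := by
    apply pow_le_pow_left₀ _ hkey
    nlinarith
  have hq : 8 * a < ((7 + 6 * a - a ^ 2) / 6) ^ 3 := by
    have hfac : (7 + 6 * a - a ^ 2) ^ 3 - 1728 * a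
        = (1 - a) ^ 2 * (343 - 160 * a - 54 * a ^ 2 + 16 * a ^ 3 - a ^ 4) := by ring
    have hr : 0 < 343 - 160 * a - 54 * a ^ 2 + 16 * a ^ 3 - a ^ 4 := by nlinarith
    have h1ma : 0 < (1 - a) ^ 2 := pow_pos (by linarith) 2
    nlinarith [mul_pos h1ma hr]
  have hlt : 8 * a < (a + sAux a) ^ 3 := lt_of_lt_of_le hq hcube
  constructor
  · positivity
  · rw [div_lt_one (by positivity)]
    exact hlt
end

section
/- The function G(x) := −3x³ − 9x²·cos x·sin x + 6x·sin²x − 9x·cos²x·sin²x + 14·cos x·sin³x + cos³x·sin³x satisfies G(x) < 0 for all x ∈ (0, π/2). -/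
/-!
Near `0` the function `G` vanishes to order nine, so only sharp estimates can work. The
partial Maclaurin sums of `sin` and `cos` differentiate into each other, so integrating from `0`
shows that their errors alternate in sign. Squeezing `sin` and `cos` between consecutive partial
sums and bounding each monomial of `G` from above (after `cos² sin² = sin² - sin⁴`) gives a
polynomial majorant `x⁹ Q(x²)`, and `Q` is negative on `[0, 2.4675] ⊇ [0, (π/2)²]`.
-/

open Real Finset
open scoped Nat

noncomputable def sinTaylor (n : ℕ) (x : ℝ) : ℝ :=
  ∑ k ∈ range n, (-1) ^ k * x ^ (2 * k + 1) / (2 * k + 1)!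

noncomputable def cosTaylor (n : ℕ) (x : ℝ) : ℝ :=
  ∑ k ∈ range n, (-1) ^ k * x ^ (2 * k) / (2 * k)!

lemma hasDerivAt_sinTaylor (n : ℕ) (x : ℝ) :
    HasDerivAt (sinTaylor n) (cosTaylor n x) x := by
  unfold sinTaylor cosTaylor
  refine HasDerivAt.fun_sum fun k _ => ?_
  refine (((hasDerivAt_pow (2 * k + 1) x).const_mul ((-1 : ℝ) ^ k)).div_const
    ((2 * k + 1)! : ℝ)).congr_deriv ?_
  rw [Nat.factorial_succ]
  push_cast
  field_simp

lemma hasDerivAt_cosTaylor_succ (n : ℕ) (x : ℝ) :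
    HasDerivAt (cosTaylor (n + 1)) (-sinTaylor n x) x := by
  have hsum : cosTaylor (n + 1) = fun y =>
      ∑ k ∈ range n, (-1 : ℝ) ^ (k + 1) * y ^ (2 * k + 2) / (2 * k + 2)! + 1 := by
    ext y
    simp [cosTaylor, sum_range_succ', mul_add]
  rw [hsum, sinTaylor, ← sum_neg_distrib]
  refine (HasDerivAt.fun_sum fun k _ => ?_).add_const 1
  refine (((hasDerivAt_pow (2 * k + 2) x).const_mul ((-1 : ℝ) ^ (k + 1))).div_const
    ((2 * k + 2)! : ℝ)).congr_deriv ?_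
  rw [Nat.factorial_succ (2 * k + 1)]
  push_cast
  field_simp
  ring

lemma le_apply_of_hasDerivAt_nonneg {f f' : ℝ → ℝ} (hf : ∀ t, HasDerivAt f (f' t) t)
    (hf' : ∀ t, 0 < t → 0 ≤ f' t) {x : ℝ} (hx : 0 ≤ x) : f 0 ≤ f x := by
  refine monotoneOn_of_hasDerivWithinAt_nonneg (convex_Ici 0)
    (fun t _ => (hf t).continuousAt.continuousWithinAt)
    (fun t _ => (hf t).hasDerivWithinAt) (fun t ht => hf' t ?_)
    Set.self_mem_Ici hx hx
  simpa using ht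

lemma sinTaylor_sub_sin_sign_of_cos {n : ℕ}
    (h : ∀ t, 0 < t → 0 ≤ (-1) ^ n * (cosTaylor (n + 1) t - cos t)) {x : ℝ} (hx : 0 ≤ x) :
    0 ≤ (-1) ^ n * (sinTaylor (n + 1) x - sin x) := by
  simpa [sinTaylor] using le_apply_of_hasDerivAt_nonneg
    (fun t => ((hasDerivAt_sinTaylor (n + 1) t).sub (hasDerivAt_sin t)).const_mul _) h hx

lemma cosTaylor_sub_cos_sign (n : ℕ) {x : ℝ} (hx : 0 ≤ x) :
    0 ≤ (-1) ^ n * (cosTaylor (n + 1) x - cos x) := by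
  induction n generalizing x with
  | zero => simpa [cosTaylor] using cos_le_one x
  | succ n ih =>
    have hderiv : ∀ t, HasDerivAt (fun t => (-1) ^ (n + 1) * (cosTaylor (n + 2) t - cos t))
        ((-1) ^ n * (sinTaylor (n + 1) t - sin t)) t := fun t =>
      (((hasDerivAt_cosTaylor_succ (n + 1) t).sub (hasDerivAt_cos t)).const_mul _).congr_deriv
        (by ring)
    simpa [cosTaylor, sum_range_succ'] using le_apply_of_hasDerivAt_nonneg hderiv
      (fun t ht => sinTaylor_sub_sin_sign_of_cos (fun s hs => ih hs.le) ht.le) hx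

lemma sinTaylor_sub_sin_sign (n : ℕ) {x : ℝ} (hx : 0 ≤ x) :
    0 ≤ (-1) ^ n * (sinTaylor (n + 1) x - sin x) :=
  sinTaylor_sub_sin_sign_of_cos (fun _ ht => cosTaylor_sub_cos_sign n ht.le) hx

lemma G_expr_le_of_bounds {x s c sL sU cL cU : ℝ} (hx : 0 ≤ x) (hc : 0 ≤ c)
    (hsc : s ^ 2 + c ^ 2 = 1) (hsL₀ : 0 ≤ sL) (hsL : sL ≤ s) (hsU : s ≤ sU)
    (hcL : cL ≤ c) (hcU : c ≤ cU) :
    -3 * x ^ 3 - 9 * x ^ 2 * c * s + 6 * x * s ^ 2 - 9 * x * c ^ 2 * s ^ 2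
        + 14 * c * s ^ 3 + c ^ 3 * s ^ 3 ≤
      -3 * x ^ 3 - 9 * x ^ 2 * (cL * sL) + 6 * x * sU ^ 2 - 9 * x * (sL ^ 2 - sU ^ 4)
        + 14 * cU * sU ^ 3 + cU ^ 3 * sU ^ 3 := by
  have hs : 0 ≤ s := hsL₀.trans hsL
  have hcs : cL * sL ≤ c * s := calc
    cL * sL ≤ c * sL := mul_le_mul_of_nonneg_right hcL hsL₀
    _ ≤ c * s := mul_le_mul_of_nonneg_left hsL hc
  have hs2 : s ^ 2 ≤ sU ^ 2 := pow_le_pow_left₀ hs hsU 2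
  have hcs2 : sL ^ 2 - sU ^ 4 ≤ c ^ 2 * s ^ 2 := by
    have : c ^ 2 * s ^ 2 = s ^ 2 - s ^ 4 := by linear_combination s ^ 2 * hsc
    linarith [pow_le_pow_left₀ hsL₀ hsL 2, pow_le_pow_left₀ hs hsU 4]
  have hs3 : s ^ 3 ≤ sU ^ 3 := pow_le_pow_left₀ hs hsU 3
  have hcs3 : c * s ^ 3 ≤ cU * sU ^ 3 :=
    mul_le_mul hcU hs3 (by positivity) (hc.trans hcU)
  have hc3s3 : c ^ 3 * s ^ 3 ≤ cU ^ 3 * sU ^ 3 :=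
    mul_le_mul (pow_le_pow_left₀ hc hcU 3) hs3 (by positivity) (pow_nonneg (hc.trans hcU) 3)
  linarith [mul_le_mul_of_nonneg_left hcs (by positivity : (0 : ℝ) ≤ 9 * x ^ 2),
    mul_le_mul_of_nonneg_left hs2 (by positivity : (0 : ℝ) ≤ 6 * x),
    mul_le_mul_of_nonneg_left hcs2 (by positivity : (0 : ℝ) ≤ 9 * x)]

lemma majorant_factor_neg {y : ℝ} (hy₀ : 0 ≤ y) (hy : y ≤ 2.4675) :
    -53 / 315 + 36167 / 302400 * y - 5069 / 129600 * y ^ 2 + 499 / 66150 * y ^ 3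
      - 491 / 518400 * y ^ 4 + 3341 / 41472000 * y ^ 5 - 8689 / 1866240000 * y ^ 6
      + 11 / 62208000 * y ^ 7 - 1 / 248832000 * y ^ 8 + 1 / 23887872000 * y ^ 9 < 0 := by
  have hY : 0 ≤ 2.4675 - y := by linarith
  -- The quintic truncation has negative coefficients in the Bernstein basis of `[0, 2.4675]`.
  have hquintic : -53 / 315 + 36167 / 302400 * y - 5069 / 129600 * y ^ 2 + 499 / 66150 * y ^ 3
      - 491 / 518400 * y ^ 4 + 3341 / 41472000 * y ^ 5 < 0 := by
    linarith [pow_nonneg hY 5, mul_nonneg hy₀ (pow_nonneg hY 4),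
      mul_nonneg (pow_nonneg hy₀ 2) (pow_nonneg hY 3),
      mul_nonneg (pow_nonneg hy₀ 3) (pow_nonneg hY 2),
      mul_nonneg (pow_nonneg hy₀ 4) hY, pow_nonneg hy₀ 5]
  have h67 : y ^ 6 * (-8689 / 1866240000 + 11 / 62208000 * y) ≤ 0 :=
    mul_nonpos_of_nonneg_of_nonpos (by positivity) (by linarith)
  have h89 : y ^ 8 * (-1 / 248832000 + 1 / 23887872000 * y) ≤ 0 :=
    mul_nonpos_of_nonneg_of_nonpos (by positivity) (by linarith)
  linarith

theorem G_neg :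
    ∀ x ∈ Set.Ioo (0 : ℝ) (π / 2),
      -3 * x ^ 3 - 9 * x ^ 2 * cos x * sin x + 6 * x * sin x ^ 2
        - 9 * x * cos x ^ 2 * sin x ^ 2 + 14 * cos x * sin x ^ 3
        + cos x ^ 3 * sin x ^ 3 < 0 := by
  rintro x ⟨hx₀, hxπ⟩
  have hx2 : x ^ 2 ≤ 2.4675 := by nlinarith [pi_lt_d4]
  have hsL₀ : 0 ≤ sinTaylor 4 x := by
    simp only [sinTaylor, sum_range_succ, range_zero, sum_empty]
    norm_num [Nat.factorial]
    nlinarith [pow_pos hx₀ 3, pow_pos hx₀ 5, pow_pos hx₀ 7]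
  calc _ ≤ -3 * x ^ 3 - 9 * x ^ 2 * (cosTaylor 4 x * sinTaylor 4 x)
        + 6 * x * sinTaylor 3 x ^ 2 - 9 * x * (sinTaylor 4 x ^ 2 - sinTaylor 3 x ^ 4)
        + 14 * cosTaylor 3 x * sinTaylor 3 x ^ 3 + cosTaylor 3 x ^ 3 * sinTaylor 3 x ^ 3 :=
      G_expr_le_of_bounds hx₀.le (cos_pos_of_mem_Ioo ⟨by linarith, hxπ⟩).le
        (sin_sq_add_cos_sq x) hsL₀ (by linarith [sinTaylor_sub_sin_sign 3 hx₀.le])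
        (by linarith [sinTaylor_sub_sin_sign 2 hx₀.le])
        (by linarith [cosTaylor_sub_cos_sign 3 hx₀.le])
        (by linarith [cosTaylor_sub_cos_sign 2 hx₀.le])
    _ = x ^ 9 * (-53 / 315 + 36167 / 302400 * x ^ 2 - 5069 / 129600 * (x ^ 2) ^ 2
          + 499 / 66150 * (x ^ 2) ^ 3 - 491 / 518400 * (x ^ 2) ^ 4
          + 3341 / 41472000 * (x ^ 2) ^ 5 - 8689 / 1866240000 * (x ^ 2) ^ 6
          + 11 / 62208000 * (x ^ 2) ^ 7 - 1 / 248832000 * (x ^ 2) ^ 8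
          + 1 / 23887872000 * (x ^ 2) ^ 9) := by
      simp only [sinTaylor, cosTaylor, sum_range_succ, range_zero, sum_empty]
      norm_num [Nat.factorial]
      ring
    _ < 0 := mul_neg_of_pos_of_neg (by positivity) (majorant_factor_neg (by positivity) hx2)
end
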